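/- arXiv:2005.09585 — 2 statements merged into one kernel-verified Lean document; each statement's English description precedes it below -/
import Mathlib

section
/- The 2-coloring f of the quarter plane defined by f(i,j) = t(i+j) is frameless: there are no m, n ≥ 0 and p, q ≥ 1 such that f(m, n+i) = f(m+p, n+i) for all 0 ≤ i ≤ q and f(m+j, n) = f(m+j, n+q) for all 0 ≤ j ≤ p. -/
/-- Thue-Morse sequence: parity of number of 1 bits of n. -/
def t (n : ℕ) : Fin 2 := ⟨(Nat.digits 2 n).sum % 2, Nat.mod_lt _ (by norm_num)⟩

/-- Coloring of the quarter plane. -/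
def f (i j : ℕ) : Fin 2 := t (i + j)

/-- Natural-number-valued version of the Thue-Morse sequence. -/
def t' (n : ℕ) : ℕ := (Nat.digits 2 n).sum % 2

lemma t'_lt2 (n : ℕ) : t' n < 2 := Nat.mod_lt _ (by norm_num)

lemma t_eq_iff {a b : ℕ} : t a = t b ↔ t' a = t' b := by
  simp [t, t', Fin.mk.injEq]

lemma t'_even (n : ℕ) : t' (2*n) = t' n := by
  cases n with
  | zero => rfl
  | succ m =>
    unfold t'
    rw [Nat.digits_def' (by norm_num : 1 < 2) (by omega)]
    simp [Nat.mul_mod_right, Nat.mul_div_cancel_left]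

lemma t'_odd (n : ℕ) : t' (2*n+1) = (t' n + 1) % 2 := by
  unfold t'
  rw [Nat.digits_def' (by norm_num : 1 < 2) (by omega)]
  have h1 : (2*n+1) % 2 = 1 := by omega
  have h2 : (2*n+1) / 2 = n := by omega
  rw [h1, h2]
  simp [Nat.add_mod]
  omega

lemma odd_of_eq_succ {k : ℕ} (h : t' k = t' (k+1)) : k % 2 = 1 := by
  rcases Nat.even_or_odd k with ⟨a, ha⟩ | ⟨a, ha⟩
  · exfalso
    have h1 := t'_even a
    have h2 := t'_odd a
    have h3 := t'_lt2 a
    rw [show k = 2*a by omega] at h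
    omega
  · omega

/-- Key step in the odd case: a pair of equalities at an even position forces
an equal consecutive pair, hence an odd index. -/
lemma odd_pair_step {s p w : ℕ} (hw : p = 2*w+1)
    (H : ∀ i ≤ p, t' (s + i) = t' (s + p + i))
    {u i : ℕ} (hu : s + i = 2*u) (hi1 : i ≤ p) (hi2 : i + 1 ≤ p) :
    (u + w) % 2 = 1 := by
  have e1 := H i hi1
  have e2 := H (i+1) hi2
  rw [show s + i = 2*u from hu, show s + p + i = 2*(u+w)+1 by omega] at e1
  rw [show s + (i+1) = 2*u+1 by omega, show s + p + (i+1) = 2*(u+w+1) by omega] at e2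
  rw [t'_even, t'_odd] at e1
  rw [t'_odd, t'_even] at e2
  have l1 := t'_lt2 u
  have l2 := t'_lt2 (u+w)
  have l3 := t'_lt2 (u+w+1)
  exact odd_of_eq_succ (by omega : t' (u+w) = t' (u+w+1))

/-- The Thue-Morse sequence is overlap-free. -/
lemma no_overlap : ∀ p, 1 ≤ p → ∀ s, ¬ (∀ i ≤ p, t' (s + i) = t' (s + p + i)) := by
  intro p
  induction p using Nat.strong_induction_on with
  | _ p ih =>
    intro hp s H
    rcases Nat.even_or_odd p with ⟨r, hr⟩ | ⟨w, hw⟩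
    · -- p = r + r, even
      have hr1 : 1 ≤ r := by omega
      rcases Nat.even_or_odd s with ⟨a, ha⟩ | ⟨a, ha⟩
      · refine ih r (by omega) hr1 a ?_
        intro i hi
        have h := H (2*i) (by omega)
        rw [show s + 2*i = 2*(a+i) by omega, show s + p + 2*i = 2*(a+r+i) by omega,
          t'_even, t'_even] at h
        rw [h, show a + r + i = a + i + r by omega]
      · refine ih r (by omega) hr1 a ?_
        intro i hi
        have h := H (2*i) (by omega)
        rw [show s + 2*i = 2*(a+i)+1 by omega, show s + p + 2*i = 2*(a+r+i)+1 by omega,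
          t'_odd, t'_odd] at h
        have l1 := t'_lt2 (a+i)
        have l2 := t'_lt2 (a+r+i)
        have : t' (a+i) = t' (a+r+i) := by omega
        rw [this, show a + r + i = a + i + r by omega]
    · -- p = 2w+1, odd
      rcases Nat.eq_zero_or_pos w with hw0 | hw1
      · -- p = 1 : three equal consecutive values
        subst hw0
        have h0 := H 0 (by omega)
        have h1 := H 1 (by omega)
        simp only [Nat.add_zero] at h0
        rw [show s + p = s + 1 by omega] at h0
        rw [show s + 1 = s + 1 from rfl, show s + p + 1 = s + 1 + 1 by omega] at h1
        have o0 := odd_of_eq_succ h0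
        have o1 := odd_of_eq_succ h1
        omega
      rcases Nat.even_or_odd s with ⟨a, ha⟩ | ⟨a, ha⟩
      · -- s even: two adjacent even positions s, s+2
        have o0 := odd_pair_step hw H (show s + 0 = 2*a by omega) (by omega) (by omega)
        have o1 := odd_pair_step hw H (show s + 2 = 2*(a+1) by omega) (by omega) (by omega)
        omega
      · rcases Nat.lt_or_ge w 2 with hw2 | hw2
        · -- p = 3, s odd: direct contradiction
          have hw1' : w = 1 := by omega
          subst hw1'
          have e0 := H 0 (by omega)
          have e1 := H 1 (by omega)
          have e2 := H 2 (by omega)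
          have e3 := H 3 (by omega)
          rw [show s + 0 = 2*a+1 by omega, show s + p + 0 = 2*(a+2) by omega,
            t'_odd, t'_even] at e0
          rw [show s + 1 = 2*(a+1) by omega, show s + p + 1 = 2*(a+2)+1 by omega,
            t'_even, t'_odd] at e1
          rw [show s + 2 = 2*(a+1)+1 by omega, show s + p + 2 = 2*(a+3) by omega,
            t'_odd, t'_even] at e2
          rw [show s + 3 = 2*(a+2) by omega, show s + p + 3 = 2*(a+3)+1 by omega,
            t'_even, t'_odd] at e3
          have l0 := t'_lt2 a
          have l1 := t'_lt2 (a+1)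
          have l2 := t'_lt2 (a+2)
          have l3 := t'_lt2 (a+3)
          omega
        · -- w ≥ 2: two adjacent even positions s+1, s+3
          have o0 := odd_pair_step hw H (show s + 1 = 2*(a+1) by omega) (by omega) (by omega)
          have o1 := odd_pair_step hw H (show s + 3 = 2*(a+2) by omega) (by omega) (by omega)
          omega

theorem quarter_plane_frameless :
    ¬ ∃ (m n p q : ℕ), 1 ≤ p ∧ 1 ≤ q ∧
      (∀ i ≤ q, f m (n + i) = f (m + p) (n + i)) ∧
      (∀ j ≤ p, f (m + j) n = f (m + j) (n + q)) := by
  rintro ⟨m, n, p, q, hp, hq, hA, hB⟩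
  rcases le_or_gt p q with hpq | hpq
  · refine no_overlap p hp (m + n) ?_
    intro i hi
    have h := hA i (le_trans hi hpq)
    rw [f, f, t_eq_iff] at h
    rw [show m + n + i = m + (n + i) by omega, show m + n + p + i = m + p + (n + i) by omega]
    exact h
  · refine no_overlap q hq (m + n) ?_
    intro j hj
    have h := hB j (by omega)
    rw [f, f, t_eq_iff] at h
    rw [show m + n + j = m + j + n by omega, show m + n + q + j = m + j + (n + q) by omega]
    exact h
end

section
/- Every factor of the Thue-Morse word is overlap-free; in particular, the central word t(2^(2n+1)−1) ⋯ t(1) t(0) t(0) t(1) ⋯ t(2^(2n+1)−1) of the two-sided Thue-Morse word equals μ^(2n+2)(1) and is overlap-free. -/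
/-- Two-sided Thue-Morse word. -/
def u (n : ℤ) : Fin 2 := if 0 ≤ n then t n.toNat else t (-1 - n).toNat

/-- Thue-Morse morphism on letters: 0 ↦ 01, 1 ↦ 10. -/
def muL : Fin 2 → List (Fin 2) := fun a => if a = 0 then [0, 1] else [1, 0]

/-- The morphism ν on letters: 0 ↦ 10, 1 ↦ 01. -/
def nuL : Fin 2 → List (Fin 2) := fun a => if a = 0 then [1, 0] else [0, 1]

/-- k-fold iterate of μ applied to a word. -/
def muIter (k : ℕ) (w : List (Fin 2)) : List (Fin 2) := (fun v => v.flatMap muL)^[k] w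

/-- k-fold iterate of ν applied to a word. -/
def nuIter (k : ℕ) (w : List (Fin 2)) : List (Fin 2) := (fun v => v.flatMap nuL)^[k] w

/-!
Decimation `t (2 * m + b) = t m + b` halves the period of an overlap of even period, so it is
enough to exclude odd periods. An overlap of odd period `p` either contains a square `aa`, whose
copy `p` places later starts at a position of the other parity, so one of them is a block
`t (2 * m) t (2 * m + 1)`, which is `01` or `10`; or it alternates, and then
`t (i + p) = t i + 1 ≠ t i`.

For the central word, `μ^m(a)` is the prefix of length `2 ^ m` of `t` shifted by `a`. Left of
the origin `u` reads the prefix of length `2 ^ e` backwards, and `t (2 ^ e - 1 - k) = t k + e`;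
for odd `e` this is the complemented prefix, as is the next block `t (2 ^ e + k) = t k + 1`, so the
central word of length `2 ^ (e + 1)` is `μ^(e + 1)(1)`.
-/

section

open Fin.CommRing

/-- `f i ⋯ f (i + 2 * p)` is an overlap `axaxa` with `|ax| = p`. -/
def HasOverlapAt {α : Type*} (f : ℕ → α) (i p : ℕ) : Prop :=
  ∀ j ≤ p, f (i + j) = f (i + p + j)

lemma Fin.two_eq_add_one_of_ne : ∀ {a b : Fin 2}, a ≠ b → b = a + 1 := by decide

lemma Fin.natCast_eq_one_of_odd {p : ℕ} (hp : Odd p) : (p : Fin 2) = 1 :=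
  ZMod.natCast_eq_one_iff_odd.mpr hp

lemma eq_add_of_forall_ne_succ (f : ℕ → Fin 2) (i : ℕ) :
    ∀ p, (∀ j < p, f (i + j) ≠ f (i + j + 1)) → f (i + p) = f i + p
  | 0, _ => by simp
  | p + 1, h => by
    rw [← add_assoc, Fin.two_eq_add_one_of_ne (h p p.lt_succ_self),
      eq_add_of_forall_ne_succ f i p fun j hj => h j (hj.trans p.lt_succ_self)]
    push_cast
    ring

lemma t_zero : t 0 = 0 := by
  ext
  simp [t]

lemma t_two_mul (m : ℕ) : t (2 * m) = t m := by
  rcases Nat.eq_zero_or_pos m with rfl | hm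
  · rfl
  · ext
    simp [t, Nat.digits_def' one_lt_two (by positivity : 0 < 2 * m)]

lemma t_two_mul_add_one (m : ℕ) : t (2 * m + 1) = t m + 1 := by
  ext
  have hmod : (2 * m + 1) % 2 = 1 := by omega
  have hdiv : (2 * m + 1) / 2 = m := by omega
  simp only [t, Nat.digits_def' one_lt_two (by omega : 0 < 2 * m + 1), hmod, hdiv,
    List.sum_cons, Fin.val_add, Fin.val_one]
  omega

lemma t_two_mul_add (m : ℕ) {b : ℕ} (hb : b < 2) : t (2 * m + b) = t m + b := by
  interval_cases b
  · simp [t_two_mul]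
  · simp [t_two_mul_add_one]

lemma t_two_mul_ne_t_two_mul_add_one (m : ℕ) : t (2 * m) ≠ t (2 * m + 1) := by
  simp [t_two_mul, t_two_mul_add_one]

lemma t_two_pow_add {e k : ℕ} (hk : k < 2 ^ e) : t (2 ^ e + k) = t k + 1 := by
  induction e generalizing k with
  | zero =>
    obtain rfl : k = 0 := by simpa using hk
    simpa [t_zero] using t_two_mul_add_one 0
  | succ e ih =>
    have hq : k / 2 < 2 ^ e := by rw [pow_succ] at hk; omega
    have hsplit : 2 ^ (e + 1) + k = 2 * (2 ^ e + k / 2) + k % 2 := by rw [pow_succ]; omega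
    conv_rhs => rw [← Nat.div_add_mod k 2]
    rw [hsplit, t_two_mul_add _ (k.mod_lt two_pos), ih hq, t_two_mul_add _ (k.mod_lt two_pos)]
    ring

lemma t_two_pow_sub_one_sub {e k : ℕ} (hk : k < 2 ^ e) : t (2 ^ e - 1 - k) = t k + e := by
  induction e generalizing k with
  | zero =>
    obtain rfl : k = 0 := by simpa using hk
    simp
  | succ e ih =>
    have hpow : 2 ^ (e + 1) = 2 * 2 ^ e := by ring
    obtain ⟨q, rfl | rfl⟩ := Nat.even_or_odd' k
    · have hsplit : 2 ^ (e + 1) - 1 - 2 * q = 2 * (2 ^ e - 1 - q) + 1 := by omega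
      rw [hsplit, t_two_mul_add_one, ih (by omega), t_two_mul]
      push_cast
      ring
    · have hsplit : 2 ^ (e + 1) - 1 - (2 * q + 1) = 2 * (2 ^ e - 1 - q) := by omega
      rw [hsplit, t_two_mul, ih (by omega), t_two_mul_add_one]
      push_cast
      grind

lemma hasOverlapAt_t_div_two {i q : ℕ} (h : HasOverlapAt t i (2 * q)) :
    HasOverlapAt t (i / 2) q := by
  intro j hj
  have hij := h (2 * j) (by omega)
  rwa [show i + 2 * j = 2 * (i / 2 + j) + i % 2 by omega,
    show i + 2 * q + 2 * j = 2 * (i / 2 + q + j) + i % 2 by omega,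
    t_two_mul_add _ (i.mod_lt two_pos), t_two_mul_add _ (i.mod_lt two_pos), add_left_inj] at hij

lemma not_hasOverlapAt_t_of_odd {i p : ℕ} (hp : Odd p) : ¬ HasOverlapAt t i p := by
  intro h
  obtain ⟨s, rfl⟩ := hp
  by_cases hsq : ∃ j < 2 * s + 1, t (i + j) = t (i + j + 1)
  · obtain ⟨j, hj, hjj⟩ := hsq
    have hcopy : t (i + (2 * s + 1) + j) = t (i + (2 * s + 1) + j + 1) := by
      rw [← h j hj.le, hjj]
      exact h (j + 1) hj
    obtain ⟨r, hr | hr⟩ := Nat.even_or_odd' (i + j)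
    · exact t_two_mul_ne_t_two_mul_add_one r (by rwa [hr] at hjj)
    · refine t_two_mul_ne_t_two_mul_add_one (r + s + 1) ?_
      rwa [show i + (2 * s + 1) + j = 2 * (r + s + 1) by omega] at hcopy
  · push Not at hsq
    have halt := eq_add_of_forall_ne_succ t i (2 * s + 1) hsq
    have hper := h 0 (Nat.zero_le _)
    rw [add_zero, add_zero, halt, Fin.natCast_eq_one_of_odd (odd_two_mul_add_one s)] at hper
    simp at hper

theorem not_hasOverlapAt_t {p : ℕ} (hp : 0 < p) (i : ℕ) : ¬ HasOverlapAt t i p := by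
  induction p using Nat.strong_induction_on generalizing i with
  | _ p ih =>
    obtain ⟨q, rfl | rfl⟩ := Nat.even_or_odd' p
    · exact fun h => ih q (by omega) (by omega) (i / 2) (hasOverlapAt_t_div_two h)
    · exact not_hasOverlapAt_t_of_odd (odd_two_mul_add_one q)

lemma muIter_append (m : ℕ) (v w : List (Fin 2)) :
    muIter m (v ++ w) = muIter m v ++ muIter m w := by
  induction m generalizing v w with
  | zero => rfl
  | succ m ih =>
    simp only [muIter, Function.iterate_succ_apply, List.flatMap_append]
    exact ih _ _

lemma muIter_succ_singleton (m : ℕ) (a : Fin 2) : muIter (m + 1) [a] = muIter m [a, a + 1] := by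
  fin_cases a <;> rfl

lemma muIter_singleton (m : ℕ) (a : Fin 2) :
    muIter m [a] = (List.range (2 ^ m)).map (t · + a) := by
  induction m generalizing a with
  | zero => simp [muIter, t_zero]
  | succ m ih =>
    rw [muIter_succ_singleton, ← List.singleton_append, muIter_append, ih, ih, pow_succ, mul_two,
      List.range_add, List.map_append, List.map_map]
    congr 1
    refine List.map_congr_left fun k hk => ?_
    simp only [Function.comp_apply, t_two_pow_add (List.mem_range.mp hk)]
    ring

lemma muIter_singleton_getD {m k : ℕ} (a : Fin 2) (hk : k < 2 ^ m) :
    (muIter m [a]).getD k 0 = t k + a := by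
  simp [muIter_singleton, hk]

lemma u_natCast (m : ℕ) : u m = t m := by
  simp [u]

lemma u_neg_one_sub_natCast (m : ℕ) : u (-1 - m) = t m := by
  rw [u, if_neg (by omega)]
  congr
  omega

lemma u_neg_two_pow_add {e k : ℕ} (he : Odd e) (hk : k < 2 ^ (e + 1)) :
    u (-(2 ^ e : ℤ) + k) = t k + 1 := by
  have hpow : (2 : ℤ) ^ e = ((2 ^ e : ℕ) : ℤ) := by push_cast; rfl
  rcases lt_or_ge k (2 ^ e) with hlt | hge
  · rw [show -(2 ^ e : ℤ) + k = -1 - ((2 ^ e - 1 - k : ℕ) : ℤ) by rw [hpow]; omega,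
      u_neg_one_sub_natCast, t_two_pow_sub_one_sub hlt, Fin.natCast_eq_one_of_odd he]
  · have hnext := t_two_pow_add (e := e) (k := k - 2 ^ e) (by rw [pow_succ] at hk; omega)
    rw [Nat.add_sub_cancel' hge] at hnext
    rw [show -(2 ^ e : ℤ) + k = ((k - 2 ^ e : ℕ) : ℤ) by rw [hpow]; omega, u_natCast, hnext,
      add_assoc, one_add_one_eq_two, show (2 : Fin 2) = 0 from rfl, add_zero]

end

theorem factors_overlap_free_and_central_word (n : ℕ) :
    (∀ (i p : ℕ), 1 ≤ p → ¬ ∀ j ≤ p, t (i + j) = t (i + p + j)) ∧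
    (∀ k : ℕ, k < 2 ^ (2 * n + 2) →
      u (-(2 ^ (2 * n + 1) : ℤ) + (k : ℤ)) = (muIter (2 * n + 2) [1]).getD k 0) := by
  refine ⟨fun i p hp => not_hasOverlapAt_t hp i, fun k hk => ?_⟩
  rw [muIter_singleton_getD 1 hk, u_neg_two_pow_add (odd_two_mul_add_one n) hk]
end
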